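/- Let Γ be a finite nonempty set and Δ : Γ → Γ → ℤ an integer matrix with det Δ ≠ 0. Then the cokernel ℤ^Γ / Δ(ℤ^Γ) of Δ acting on integer-valued functions is isomorphic as an abelian group to the kernel of the induced homomorphism Δ⊗(ℝ/ℤ) : (ℝ/ℤ)^Γ → (ℝ/ℤ)^Γ. (In sandpile terms: the sandpile group G(Γ) is canonically isomorphic to the group of strictly harmonic circle-valued functions on the graph.) -/
import Mathlib


open scoped BigOperators

/-- The homomorphism `Δ ⊗ A : A^Γ → A^Γ` induced by an integer matrix `Δ`,
given by `((Δ ⊗ A) f) v = ∑ w, Δ v w • f w`. -/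
def lapHom {Γ : Type} [Fintype Γ] (Δ : Matrix Γ Γ ℤ) (A : Type) [AddCommGroup A] :
    (Γ → A) →+ (Γ → A) where
  toFun f v := ∑ w, Δ v w • f w
  map_zero' := by funext v; simp
  map_add' f g := by funext v; simp [smul_add, Finset.sum_add_distrib]

/-- The sandpile group `G(Γ) = ℤ^Γ / Δ(ℤ^Γ)` is isomorphic, as an abelian group,
to the kernel of `Δ ⊗ (ℝ/ℤ) : (ℝ/ℤ)^Γ → (ℝ/ℤ)^Γ`, the group of strictly harmonic
circle-valued functions. -/
theorem sandpile_group_iso_strictly_harmonic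
    (Γ : Type) [Fintype Γ] [DecidableEq Γ] [Nonempty Γ]
    (Δ : Matrix Γ Γ ℤ) (hΔ : Δ.det ≠ 0) :
    Nonempty (((Γ → ℤ) ⧸ (lapHom Δ ℤ).range) ≃+
      (lapHom Δ (AddCircle (1 : ℝ))).ker) := by
  classical
  set ΔR : Matrix Γ Γ ℝ := Δ.map (Int.cast : ℤ → ℝ) with hΔR
  have hdetR : IsUnit ΔR.det := by
    have h1 : ΔR.det = ((Δ.det : ℤ) : ℝ) := by
      rw [hΔR]
      exact (RingHom.map_det (Int.castRingHom ℝ) Δ).symm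
    rw [h1]
    exact isUnit_iff_ne_zero.2 (by exact_mod_cast hΔ)
  set B : Matrix Γ Γ ℝ := ΔR⁻¹ with hB
  have hBΔ : B * ΔR = 1 := Matrix.nonsing_inv_mul ΔR hdetR
  have hΔB : ΔR * B = 1 := Matrix.mul_nonsing_inv ΔR hdetR
  -- the map φ : ℤ^Γ → (ℝ/ℤ)^Γ, m ↦ Δ⁻¹ m mod ℤ
  let φ : (Γ → ℤ) →+ (Γ → AddCircle (1 : ℝ)) :=
    { toFun := fun m v => ((B.mulVec (fun w => (m w : ℝ)) v : ℝ) : AddCircle (1 : ℝ))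
      map_zero' := by
        funext v
        simp [Matrix.mulVec, dotProduct]
      map_add' := fun m n => by
        funext v
        have h : (fun w => ((m w + n w : ℤ) : ℝ)) = (fun w => (m w : ℝ)) + fun w => (n w : ℝ) := by
          funext w; push_cast; rfl
        show ((B.mulVec (fun w => ((m w + n w : ℤ) : ℝ)) v : ℝ) : AddCircle (1:ℝ)) = _
        rw [h, Matrix.mulVec_add]
        rfl }
  -- key computation : Δℝ ∘ B = id on casted vectors
  have hΔBm : ∀ m : Γ → ℤ, ∀ v, ∑ w, (Δ v w : ℝ) * B.mulVec (fun w => (m w : ℝ)) w = (m v : ℝ) := by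
    intro m v
    have h : ΔR.mulVec (B.mulVec (fun w => (m w : ℝ))) = (fun w => (m w : ℝ)) := by
      rw [Matrix.mulVec_mulVec, hΔB, Matrix.one_mulVec]
    simpa [Matrix.mulVec, dotProduct, hΔR, Matrix.map_apply] using congrFun h v
  have hmem : ∀ m : Γ → ℤ, φ m ∈ (lapHom Δ (AddCircle (1 : ℝ))).ker := by
    intro m
    rw [AddMonoidHom.mem_ker]
    funext v
    show ∑ w, Δ v w • ((B.mulVec (fun w => (m w : ℝ)) w : ℝ) : AddCircle (1 : ℝ)) = 0
    have hcoe : ∀ (k : ℤ) (x : ℝ), k • ((x : ℝ) : AddCircle (1 : ℝ)) = ((k • x : ℝ) : AddCircle (1 : ℝ)) := by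
      intro k x
      rw [← AddCircle.coe_zsmul]
    simp only [hcoe]
    rw [← QuotientAddGroup.mk_sum]
    have : ∑ w, (Δ v w : ℤ) • (B.mulVec (fun w => (m w : ℝ)) w) = (m v : ℝ) := by
      simpa [zsmul_eq_mul] using hΔBm m v
    rw [this, AddCircle.coe_eq_zero_iff]
    exact ⟨m v, by simp⟩
  let ψ : (Γ → ℤ) →+ (lapHom Δ (AddCircle (1 : ℝ))).ker := φ.codRestrict _ hmem
  have hsurj : Function.Surjective ψ := by
    rintro ⟨g, hg⟩
    -- lift g
    let gt : Γ → ℝ := fun v => (g v).out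
    have hgt : ∀ v, ((gt v : ℝ) : AddCircle (1 : ℝ)) = g v := fun v => Quotient.out_eq _
    rw [AddMonoidHom.mem_ker] at hg
    have hint : ∀ v, ∃ n : ℤ, (n : ℝ) = ΔR.mulVec gt v := by
      intro v
      have h0 : ∑ w, Δ v w • g w = 0 := congrFun hg v
      have h1 : ((ΔR.mulVec gt v : ℝ) : AddCircle (1 : ℝ)) = 0 := by
        rw [← h0]
        have : ΔR.mulVec gt v = ∑ w, (Δ v w : ℤ) • gt w := by
          simp [Matrix.mulVec, dotProduct, hΔR, Matrix.map_apply, zsmul_eq_mul]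
        rw [this, QuotientAddGroup.mk_sum]
        congr 1
        funext w
        rw [← hgt w, ← AddCircle.coe_zsmul]
      rw [AddCircle.coe_eq_zero_iff] at h1
      obtain ⟨n, hn⟩ := h1
      exact ⟨n, by simpa using hn⟩
    choose m hm using hint
    refine ⟨m, ?_⟩
    apply Subtype.ext
    show φ m = g
    funext v
    have : B.mulVec (fun w => (m w : ℝ)) v = gt v := by
      have h2 : (fun w => (m w : ℝ)) = ΔR.mulVec gt := funext hm
      rw [h2, Matrix.mulVec_mulVec, hBΔ, Matrix.one_mulVec]
    show ((B.mulVec (fun w => (m w : ℝ)) v : ℝ) : AddCircle (1 : ℝ)) = g v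
    rw [this, hgt]
  have hker : ψ.ker = (lapHom Δ ℤ).range := by
    ext m
    constructor
    · intro hm
      have h0 : ∀ v, ((B.mulVec (fun w => (m w : ℝ)) v : ℝ) : AddCircle (1 : ℝ)) = 0 := by
        intro v
        have := congrFun (congrArg Subtype.val (hm : ψ m = 0)) v
        exact this
      have h1 : ∀ v, ∃ n : ℤ, (n : ℝ) = B.mulVec (fun w => (m w : ℝ)) v := by
        intro v
        obtain ⟨n, hn⟩ := (AddCircle.coe_eq_zero_iff _).1 (h0 v)
        exact ⟨n, by simpa using hn⟩
      choose x hx using h1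
      refine ⟨x, ?_⟩
      funext v
      have h2 : (fun w => (x w : ℝ)) = B.mulVec (fun w => (m w : ℝ)) := funext hx
      have h3 : ΔR.mulVec (fun w => (x w : ℝ)) = (fun w => (m w : ℝ)) := by
        rw [h2, Matrix.mulVec_mulVec, hΔB, Matrix.one_mulVec]
      have h4 := congrFun h3 v
      have h5 : ΔR.mulVec (fun w => (x w : ℝ)) v = ((∑ w, Δ v w * x w : ℤ) : ℝ) := by
        simp [Matrix.mulVec, dotProduct, hΔR, Matrix.map_apply]
      rw [h5] at h4
      have : (∑ w, Δ v w * x w : ℤ) = m v := by exact_mod_cast h4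
      show ∑ w, Δ v w • x w = m v
      simpa [zsmul_eq_mul] using this
    · rintro ⟨x, rfl⟩
      rw [AddMonoidHom.mem_ker]
      apply Subtype.ext
      show φ _ = 0
      funext v
      show ((B.mulVec (fun w => ((∑ u, Δ w u • x u : ℤ) : ℝ)) v : ℝ) : AddCircle (1 : ℝ)) = 0
      have h2 : (fun w => ((∑ u, Δ w u • x u : ℤ) : ℝ)) = ΔR.mulVec (fun u => (x u : ℝ)) := by
        funext w
        simp [Matrix.mulVec, dotProduct, hΔR, Matrix.map_apply]
      rw [h2, Matrix.mulVec_mulVec, hBΔ, Matrix.one_mulVec, AddCircle.coe_eq_zero_iff]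
      exact ⟨x v, by simp⟩
  exact ⟨(QuotientAddGroup.quotientAddEquivOfEq hker.symm).trans
    (QuotientAddGroup.quotientKerEquivOfSurjective ψ hsurj)⟩
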